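/- arXiv:2503.16898 — 11 statements merged into one kernel-verified Lean document; each statement's English description precedes it below -/
import Mathlib

section
/- The set 𝒢 = {(λ₁,λ₂,λ₃) ∈ ℝ³ : λ₁+λ₂+λ₃ = λ₁λ₂λ₃} has exactly three connected components: 𝒢₊ = 𝒢 ∩ {λ₁ > 0, λ₂ > 0, λ₃ > 0}, 𝒢₋ = −𝒢₊ (the image of 𝒢₊ under the map λ ↦ −λ), and 𝒢₀ = 𝒢 \ (𝒢₊ ∪ 𝒢₋). In particular each of 𝒢₊, 𝒢₋, 𝒢₀ is nonempty and connected. -/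
open Set

lemma coassoc_mul_ne_one (l : Fin 3 → ℝ) (h : l 0 + l 1 + l 2 = l 0 * l 1 * l 2) :
    l 0 * l 1 ≠ 1 := by
  intro h1
  have h0 : l 0 * l 1 * l 2 = l 2 := by rw [h1]; ring
  have h2 : l 0 + l 1 = 0 := by linarith
  have h3 : l 1 = - l 0 := by linarith
  rw [h3] at h1
  nlinarith [sq_nonneg (l 0)]

lemma coassoc_Gp_char (l : Fin 3 → ℝ) (h : l 0 + l 1 + l 2 = l 0 * l 1 * l 2) :
    (0 < l 0 ∧ 0 < l 1 ∧ 0 < l 2) ↔ (0 < l 0 ∧ 1 < l 0 * l 1) := by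
  constructor
  · rintro ⟨h0, h1, h2⟩
    refine ⟨h0, ?_⟩
    nlinarith
  · rintro ⟨h0, h1⟩
    have hl1 : 0 < l 1 := by nlinarith
    refine ⟨h0, hl1, ?_⟩
    nlinarith

/-- The section of the surface over the plane region where `a*b ≠ 1`. -/
noncomputable def coassocF (p : ℝ × ℝ) : Fin 3 → ℝ :=
  ![p.1, p.2, (p.1 + p.2) / (p.1 * p.2 - 1)]

lemma coassocF_apply0 (p : ℝ × ℝ) : coassocF p 0 = p.1 := rfl
lemma coassocF_apply1 (p : ℝ × ℝ) : coassocF p 1 = p.2 := rfl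
lemma coassocF_apply2 (p : ℝ × ℝ) :
    coassocF p 2 = (p.1 + p.2) / (p.1 * p.2 - 1) := rfl

lemma coassocF_mem (p : ℝ × ℝ) (hp : p.1 * p.2 ≠ 1) :
    coassocF p 0 + coassocF p 1 + coassocF p 2 =
      coassocF p 0 * coassocF p 1 * coassocF p 2 := by
  rw [coassocF_apply0, coassocF_apply1, coassocF_apply2]
  have hd : p.1 * p.2 - 1 ≠ 0 := sub_ne_zero.2 hp
  field_simp
  ring

lemma coassocF_section (l : Fin 3 → ℝ) (h : l 0 + l 1 + l 2 = l 0 * l 1 * l 2) :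
    coassocF (l 0, l 1) = l := by
  have hd : l 0 * l 1 - 1 ≠ 0 := sub_ne_zero.2 (coassoc_mul_ne_one l h)
  funext i
  fin_cases i
  · rfl
  · rfl
  · show (l 0 + l 1) / (l 0 * l 1 - 1) = l 2
    field_simp
    linarith

lemma coassocF_continuousOn :
    ContinuousOn coassocF {p : ℝ × ℝ | p.1 * p.2 ≠ 1} := by
  rw [continuousOn_pi]
  intro i
  fin_cases i
  · exact continuousOn_fst
  · exact continuousOn_snd
  · show ContinuousOn (fun p : ℝ × ℝ => (p.1 + p.2) / (p.1 * p.2 - 1)) _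
    apply ContinuousOn.div
    · fun_prop
    · fun_prop
    · intro p hp
      exact sub_ne_zero.2 hp

lemma coassocC_convex : Convex ℝ {p : ℝ × ℝ | 0 < p.1 ∧ 1 < p.1 * p.2} := by
  rintro ⟨a1, b1⟩ ⟨ha1, hab1⟩ ⟨a2, b2⟩ ⟨ha2, hab2⟩ s t hs ht hst
  simp only [mem_setOf_eq, Prod.smul_mk, Prod.mk_add_mk, smul_eq_mul] at *
  have hb1 : 0 < b1 := by nlinarith
  have hb2 : 0 < b2 := by nlinarith
  constructor
  · rcases eq_or_lt_of_le hs with rfl | hs'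
    · have : t = 1 := by linarith
      simp only [zero_mul, zero_add]
      nlinarith
    · nlinarith
  · have hx : 0 < a1 * b2 := mul_pos ha1 hb2
    have hy : 0 < a2 * b1 := mul_pos ha2 hb1
    have hxy : 1 < (a1 * b2) * (a2 * b1) := by nlinarith
    have hsum : 2 < a1 * b2 + a2 * b1 := by nlinarith [sq_nonneg (a1*b2 - a2*b1)]
    have hst2 : (s + t)^2 = 1 := by rw [hst]; norm_num
    have hhalf : 0 ≤ s*s + t*t - 1/2 := by nlinarith [sq_nonneg (s - t)]
    rcases le_total (a1 * b1) (a2 * b2) with hc | hc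
    · nlinarith [mul_nonneg (mul_nonneg hs ht) (by linarith : (0:ℝ) ≤ a1*b2 + a2*b1 - 2),
        mul_nonneg (mul_nonneg ht ht) (by linarith : (0:ℝ) ≤ a2*b2 - a1*b1),
        mul_nonneg (by linarith : (0:ℝ) ≤ a1*b1 - 1) hhalf, hst2]
    · nlinarith [mul_nonneg (mul_nonneg hs ht) (by linarith : (0:ℝ) ≤ a1*b2 + a2*b1 - 2),
        mul_nonneg (mul_nonneg hs hs) (by linarith : (0:ℝ) ≤ a1*b1 - a2*b2),
        mul_nonneg (by linarith : (0:ℝ) ≤ a2*b2 - 1) hhalf, hst2]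

lemma coassocD_pathConnected : IsPathConnected {p : ℝ × ℝ | p.1 * p.2 < 1} := by
  rw [isPathConnected_iff]
  refine ⟨⟨(0, 0), by norm_num⟩, ?_⟩
  have key : ∀ q ∈ {p : ℝ × ℝ | p.1 * p.2 < 1}, JoinedIn {p : ℝ × ℝ | p.1 * p.2 < 1} q (0, 0) := by
    intro q hq
    have hq' : q.1 * q.2 < 1 := hq
    apply JoinedIn.of_segment_subset
    rw [segment_subset_iff]
    intro s t hs ht hst
    have h1 : (s • q + t • ((0:ℝ), (0:ℝ))).1 = s * q.1 := by simp
    have h2 : (s • q + t • ((0:ℝ), (0:ℝ))).2 = s * q.2 := by simp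
    show (s • q + t • ((0:ℝ), (0:ℝ))).1 * (s • q + t • ((0:ℝ), (0:ℝ))).2 < 1
    rw [h1, h2]
    have hs1 : s ≤ 1 := by linarith
    rcases le_or_gt (q.1 * q.2) 0 with h | h
    · nlinarith [sq_nonneg s]
    · nlinarith [mul_nonneg (by nlinarith : (0:ℝ) ≤ 1 - s*s) h.le]
  intro x hx y hy
  exact (key x hx).trans (key y hy).symm

theorem coassociative_locus_three_components :
    let G : Set (Fin 3 → ℝ) := {l | l 0 + l 1 + l 2 = l 0 * l 1 * l 2}
    let Gp : Set (Fin 3 → ℝ) := {l | l ∈ G ∧ 0 < l 0 ∧ 0 < l 1 ∧ 0 < l 2}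
    let Gm : Set (Fin 3 → ℝ) := (fun l => -l) '' Gp
    let G0 : Set (Fin 3 → ℝ) := G \ (Gp ∪ Gm)
    (Gp.Nonempty ∧ Gm.Nonempty ∧ G0.Nonempty) ∧
    IsConnected Gp ∧ IsConnected Gm ∧ IsConnected G0 ∧
    (∀ x ∈ Gp, connectedComponentIn G x = Gp) ∧
    (∀ x ∈ Gm, connectedComponentIn G x = Gm) ∧
    (∀ x ∈ G0, connectedComponentIn G x = G0) := by
  intro G Gp Gm G0
  have hGmem : ∀ l : Fin 3 → ℝ, l ∈ G ↔ l 0 + l 1 + l 2 = l 0 * l 1 * l 2 := fun l => Iff.rfl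
  have hGneg : ∀ l ∈ G, -l ∈ G := by
    intro l hl
    rw [hGmem] at hl ⊢
    simp only [Pi.neg_apply]
    linear_combination -hl
  -- characterization of Gp
  have hGpU : ∀ l, l ∈ Gp ↔ l ∈ G ∧ 0 < l 0 ∧ 1 < l 0 * l 1 := by
    intro l
    constructor
    · rintro ⟨hlG, hpos⟩
      exact ⟨hlG, (coassoc_Gp_char l hlG).1 hpos⟩
    · rintro ⟨hlG, hpos⟩
      exact ⟨hlG, (coassoc_Gp_char l hlG).2 hpos⟩
  -- characterization of Gm
  have hGmneg : ∀ l, l ∈ Gm ↔ -l ∈ Gp := by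
    intro l
    constructor
    · rintro ⟨m, hm, rfl⟩
      simpa [neg_neg] using hm
    · intro h
      exact ⟨-l, h, neg_neg l⟩
  have hGmV : ∀ l, l ∈ Gm ↔ l ∈ G ∧ l 0 < 0 ∧ 1 < l 0 * l 1 := by
    intro l
    rw [hGmneg, hGpU]
    constructor
    · rintro ⟨hG', h0, h1⟩
      simp only [Pi.neg_apply] at h0 h1
      refine ⟨by simpa [neg_neg] using hGneg _ hG', by linarith, by nlinarith⟩
    · rintro ⟨hG', h0, h1⟩
      refine ⟨hGneg _ hG', ?_, ?_⟩
      · simp only [Pi.neg_apply]; linarith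
      · simp only [Pi.neg_apply]; nlinarith
  -- characterization of G0
  have hG0W : ∀ l, l ∈ G0 ↔ l ∈ G ∧ l 0 * l 1 < 1 := by
    intro l
    constructor
    · rintro ⟨hlG, hnot⟩
      refine ⟨hlG, ?_⟩
      rcases lt_trichotomy (l 0 * l 1) 1 with h | h | h
      · exact h
      · exact absurd h (coassoc_mul_ne_one l hlG)
      · exfalso
        rcases lt_trichotomy (l 0) 0 with h0 | h0 | h0
        · exact hnot (Or.inr ((hGmV l).2 ⟨hlG, h0, h⟩))
        · rw [h0] at h; simp at h; linarith
        · exact hnot (Or.inl ((hGpU l).2 ⟨hlG, h0, h⟩))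
    · rintro ⟨hlG, hlt⟩
      refine ⟨hlG, ?_⟩
      rintro (h | h)
      · exact absurd ((hGpU l).1 h).2.2 (by linarith)
      · exact absurd ((hGmV l).1 h).2.2 (by linarith)
  -- nonemptiness
  have hs3 : Real.sqrt 3 * Real.sqrt 3 = 3 := Real.mul_self_sqrt (by norm_num)
  have hs3pos : 0 < Real.sqrt 3 := Real.sqrt_pos.2 (by norm_num)
  have hxp : (fun _ : Fin 3 => Real.sqrt 3) ∈ Gp := by
    refine ⟨?_, hs3pos, hs3pos, hs3pos⟩
    rw [hGmem]
    linear_combination (-Real.sqrt 3) * hs3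
  have hnep : Gp.Nonempty := ⟨_, hxp⟩
  have hnem : Gm.Nonempty := hnep.image _
  have hne0 : G0.Nonempty := by
    refine ⟨(fun _ : Fin 3 => 0), (hG0W _).2 ⟨?_, by norm_num⟩⟩
    rw [hGmem]; norm_num
  -- Gp as image
  have hGpim : Gp = coassocF '' {p : ℝ × ℝ | 0 < p.1 ∧ 1 < p.1 * p.2} := by
    ext l
    constructor
    · intro hl
      obtain ⟨hlG, h0, h1⟩ := (hGpU l).1 hl
      exact ⟨(l 0, l 1), ⟨h0, h1⟩, coassocF_section l hlG⟩
    · rintro ⟨p, ⟨hp0, hp1⟩, rfl⟩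
      have hne : p.1 * p.2 ≠ 1 := by intro h; rw [h] at hp1; exact lt_irrefl 1 hp1
      refine (hGpU _).2 ⟨(hGmem _).2 (coassocF_mem p hne), ?_, ?_⟩
      · rw [coassocF_apply0]; exact hp0
      · rw [coassocF_apply0, coassocF_apply1]; exact hp1
  have hG0im : G0 = coassocF '' {p : ℝ × ℝ | p.1 * p.2 < 1} := by
    ext l
    constructor
    · intro hl
      obtain ⟨hlG, hlt⟩ := (hG0W l).1 hl
      exact ⟨(l 0, l 1), hlt, coassocF_section l hlG⟩
    · rintro ⟨p, hp, rfl⟩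
      have hp' : p.1 * p.2 < 1 := hp
      have hne : p.1 * p.2 ≠ 1 := ne_of_lt hp'
      refine (hG0W _).2 ⟨(hGmem _).2 (coassocF_mem p hne), ?_⟩
      rw [coassocF_apply0, coassocF_apply1]; exact hp'
  -- connectedness
  have hCsub : {p : ℝ × ℝ | 0 < p.1 ∧ 1 < p.1 * p.2} ⊆ {p : ℝ × ℝ | p.1 * p.2 ≠ 1} := by
    rintro p ⟨_, h⟩
    exact fun hh => by rw [hh] at h; exact lt_irrefl 1 h
  have hDsub : {p : ℝ × ℝ | p.1 * p.2 < 1} ⊆ {p : ℝ × ℝ | p.1 * p.2 ≠ 1} :=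
    fun p hp => ne_of_lt hp
  have hconnGp : IsConnected Gp := by
    rw [hGpim]
    exact ((coassocC_convex.isPathConnected ⟨(2, 2), by norm_num⟩).image'
      (coassocF_continuousOn.mono hCsub)).isConnected
  have hconnGm : IsConnected Gm := hconnGp.image _ continuous_neg.continuousOn
  have hconnG0 : IsConnected G0 := by
    rw [hG0im]
    exact (coassocD_pathConnected.image' (coassocF_continuousOn.mono hDsub)).isConnected
  -- the open sets
  set U : Set (Fin 3 → ℝ) := {l | 0 < l 0 ∧ 1 < l 0 * l 1} with hU
  set V : Set (Fin 3 → ℝ) := {l | l 0 < 0 ∧ 1 < l 0 * l 1} with hV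
  set W : Set (Fin 3 → ℝ) := {l | l 0 * l 1 < 1} with hW
  have hmul : Continuous fun l : Fin 3 → ℝ => l 0 * l 1 :=
    (continuous_apply 0).mul (continuous_apply 1)
  have hUopen : IsOpen U := by
    have : U = {l : Fin 3 → ℝ | 0 < l 0} ∩ {l | 1 < l 0 * l 1} := rfl
    rw [this]
    exact (isOpen_lt continuous_const (continuous_apply 0)).inter
      (isOpen_lt continuous_const hmul)
  have hVopen : IsOpen V := by
    have : V = {l : Fin 3 → ℝ | l 0 < 0} ∩ {l | 1 < l 0 * l 1} := rfl
    rw [this]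
    exact (isOpen_lt (continuous_apply 0) continuous_const).inter
      (isOpen_lt continuous_const hmul)
  have hWopen : IsOpen W := isOpen_lt hmul continuous_const
  have hGcover : ∀ l ∈ G, l ∈ U ∨ l ∈ V ∨ l ∈ W := by
    intro l hl
    rcases lt_trichotomy (l 0 * l 1) 1 with h | h | h
    · exact Or.inr (Or.inr h)
    · exact absurd h (coassoc_mul_ne_one l ((hGmem l).1 hl))
    · rcases lt_trichotomy (l 0) 0 with h0 | h0 | h0
      · exact Or.inr (Or.inl ⟨h0, h⟩)
      · exfalso; rw [h0] at h; simp at h; linarith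
      · exact Or.inl ⟨h0, h⟩
  have hGpsubG : Gp ⊆ G := fun l hl => hl.1
  have hGmsubG : Gm ⊆ G := fun l hl => ((hGmV l).1 hl).1
  have hG0subG : G0 ⊆ G := fun l hl => hl.1
  -- component computations
  refine ⟨⟨hnep, hnem, hne0⟩, hconnGp, hconnGm, hconnG0, ?_, ?_, ?_⟩
  · -- Gp
    intro x hx
    have hxG : x ∈ G := hGpsubG hx
    apply subset_antisymm
    · have hsubG := connectedComponentIn_subset G x
      have hsubU : connectedComponentIn G x ⊆ U := by
        apply (isPreconnected_connectedComponentIn).subset_left_of_subset_union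
          hUopen (hVopen.union hWopen)
        · rw [Set.disjoint_left]
          rintro l ⟨h0, h1⟩ (⟨h0', _⟩ | h')
          · exact absurd h0 (not_lt.2 h0'.le)
          · exact absurd h1 (not_lt.2 h'.le)
        · intro l hl
          rcases hGcover l (hsubG hl) with h | h | h
          · exact Or.inl h
          · exact Or.inr (Or.inl h)
          · exact Or.inr (Or.inr h)
        · exact ⟨x, mem_connectedComponentIn hxG, ((hGpU x).1 hx).2⟩
      intro y hy
      exact (hGpU y).2 ⟨hsubG hy, hsubU hy⟩
    · exact hconnGp.isPreconnected.subset_connectedComponentIn hx hGpsubG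
  · -- Gm
    intro x hx
    have hxG : x ∈ G := hGmsubG hx
    apply subset_antisymm
    · have hsubG := connectedComponentIn_subset G x
      have hsubV : connectedComponentIn G x ⊆ V := by
        apply (isPreconnected_connectedComponentIn).subset_left_of_subset_union
          hVopen (hUopen.union hWopen)
        · rw [Set.disjoint_left]
          rintro l ⟨h0, h1⟩ (⟨h0', _⟩ | h')
          · exact absurd h0 (not_lt.2 h0'.le)
          · exact absurd h1 (not_lt.2 h'.le)
        · intro l hl
          rcases hGcover l (hsubG hl) with h | h | h
          · exact Or.inr (Or.inl h)
          · exact Or.inl h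
          · exact Or.inr (Or.inr h)
        · exact ⟨x, mem_connectedComponentIn hxG, ((hGmV x).1 hx).2⟩
      intro y hy
      exact (hGmV y).2 ⟨hsubG hy, hsubV hy⟩
    · exact hconnGm.isPreconnected.subset_connectedComponentIn hx hGmsubG
  · -- G0
    intro x hx
    have hxG : x ∈ G := hG0subG hx
    apply subset_antisymm
    · have hsubG := connectedComponentIn_subset G x
      have hsubW : connectedComponentIn G x ⊆ W := by
        apply (isPreconnected_connectedComponentIn).subset_left_of_subset_union
          hWopen (hUopen.union hVopen)
        · rw [Set.disjoint_left]
          rintro l h' (⟨_, h1⟩ | ⟨_, h1⟩) <;>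
            exact absurd h' (not_lt.2 h1.le)
        · intro l hl
          rcases hGcover l (hsubG hl) with h | h | h
          · exact Or.inr (Or.inl h)
          · exact Or.inr (Or.inr h)
          · exact Or.inl h
        · exact ⟨x, mem_connectedComponentIn hxG, ((hG0W x).1 hx).2⟩
      intro y hy
      exact (hG0W y).2 ⟨hsubG hy, hsubW hy⟩
    · exact hconnG0.isPreconnected.subset_connectedComponentIn hx hG0subG
end

section
/- If λ₁, λ₂, λ₃ are real numbers satisfying λ₁+λ₂+λ₃ = λ₁λ₂λ₃ and λ₁λ₂ < 1, then λ₁λ₂ + λ₂λ₃ + λ₃λ₁ ≤ 0. -/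
theorem sigma2_nonpos_on_G0 (l1 l2 l3 : ℝ)
    (h : l1 + l2 + l3 = l1 * l2 * l3) (h12 : l1 * l2 < 1) :
    l1 * l2 + l2 * l3 + l3 * l1 ≤ 0 := by
  have hp : (0:ℝ) < 1 - l1 * l2 := by linarith
  have key : (l1 * l2 + l2 * l3 + l3 * l1) * (1 - l1 * l2) =
      l1 * l2 * (1 - l1 * l2) - (l1 + l2) ^ 2 := by
    linear_combination (l1 + l2) * h
  nlinarith [sq_nonneg (l1 - l2), sq_nonneg (l1 + l2), mul_pos hp hp, key,
    mul_self_nonneg (l1*l2)]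
end

section
/- If λ₀, λ₁, λ₂, λ₃ are real numbers satisfying λ₀+λ₁+λ₂+λ₃ = λ₁λ₂λ₃ + λ₀λ₂λ₃ + λ₀λ₁λ₃ + λ₀λ₁λ₂, then for every index i ∈ {0,1,2,3} the second elementary symmetric polynomial of the three numbers obtained by removing λᵢ is not equal to 1; e.g. λ₀λ₂ + λ₂λ₃ + λ₃λ₀ ≠ 1 when i = 1. -/
lemma cayley_key (a b c : ℝ) (h1 : a + b + c = a * b * c)
    (h2 : a * b + b * c + c * a = 1) : False := by
  have hbc : b + c = 0 := by
    have h3 : (a ^ 2 + 1) * (b + c) = 0 := by linear_combination a * h2 + h1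
    have ha : a ^ 2 + 1 > 0 := by positivity
    have := mul_eq_zero.mp h3
    rcases this with h | h
    · linarith
    · exact h
  have hac : a + c = 0 := by
    have h3 : (b ^ 2 + 1) * (a + c) = 0 := by linear_combination b * h2 + h1
    have hb : b ^ 2 + 1 > 0 := by positivity
    rcases mul_eq_zero.mp h3 with h | h
    · linarith
    · exact h
  have hab : a + b = 0 := by
    have h3 : (c ^ 2 + 1) * (a + b) = 0 := by linear_combination c * h2 + h1
    have hc : c ^ 2 + 1 > 0 := by positivity
    rcases mul_eq_zero.mp h3 with h | h
    · linarith
    · exact h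
  have ha0 : a = 0 := by linarith
  have hb0 : b = 0 := by linarith
  have hc0 : c = 0 := by linarith
  rw [ha0, hb0, hc0] at h2
  norm_num at h2

theorem cayley_sigma2_removed_ne_one (l0 l1 l2 l3 : ℝ)
    (h : l0 + l1 + l2 + l3 =
      l1 * l2 * l3 + l0 * l2 * l3 + l0 * l1 * l3 + l0 * l1 * l2) :
    (l1 * l2 + l2 * l3 + l3 * l1 ≠ 1) ∧
    (l0 * l2 + l2 * l3 + l3 * l0 ≠ 1) ∧
    (l0 * l1 + l1 * l3 + l3 * l0 ≠ 1) ∧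
    (l0 * l1 + l1 * l2 + l2 * l0 ≠ 1) := by
  refine ⟨fun h2 => ?_, fun h2 => ?_, fun h2 => ?_, fun h2 => ?_⟩
  · exact cayley_key l1 l2 l3 (by linear_combination h + l0 * h2) (by linear_combination h2)
  · exact cayley_key l0 l2 l3 (by linear_combination h + l1 * h2) (by linear_combination h2)
  · exact cayley_key l0 l1 l3 (by linear_combination h + l2 * h2) (by linear_combination h2)
  · exact cayley_key l0 l1 l2 (by linear_combination h + l3 * h2) (by linear_combination h2)
end

section
/- Let λ₀, λ₁, λ₂, λ₃ be real numbers satisfying λ₀+λ₁+λ₂+λ₃ = λ₁λ₂λ₃ + λ₀λ₂λ₃ + λ₀λ₁λ₃ + λ₀λ₁λ₂. If λ₁λ₂ + λ₂λ₃ + λ₃λ₁ < 1, then λ₀λ₁ + λ₀λ₂ + λ₀λ₃ + λ₁λ₂ + λ₁λ₃ + λ₂λ₃ ≤ 0. -/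
theorem key_sigma2 (a b c : ℝ) :
    (a+b+c)*(a*b*c) + (a*b+b*c+c*a) * (1 - (a*b+b*c+c*a)) ≤ (a+b+c)^2 := by
  nlinarith [sq_nonneg (a-b), sq_nonneg (b-c), sq_nonneg (a-c), sq_nonneg (a+b+c),
    sq_nonneg (a*b+b*c+c*a-1), sq_nonneg (a*b-b*c), sq_nonneg (b*c-c*a), sq_nonneg (a*b-c*a),
    sq_nonneg (a+b+c - a*b*c), sq_nonneg (a*b+b*c+c*a), sq_nonneg (a*b*c)]

theorem cayley_sigma2_nonpos (l0 l1 l2 l3 : ℝ)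
    (h : l0 + l1 + l2 + l3 =
      l1 * l2 * l3 + l0 * l2 * l3 + l0 * l1 * l3 + l0 * l1 * l2)
    (h2 : l1 * l2 + l2 * l3 + l3 * l1 < 1) :
    l0 * l1 + l0 * l2 + l0 * l3 + l1 * l2 + l1 * l3 + l2 * l3 ≤ 0 := by
  have hq : 0 < 1 - (l1 * l2 + l2 * l3 + l3 * l1) := by linarith
  have hl0 : l0 * (1 - (l1 * l2 + l2 * l3 + l3 * l1)) =
      l1 * l2 * l3 - (l1 + l2 + l3) := by linear_combination h
  have hl0s : l0 * (1 - (l1 * l2 + l2 * l3 + l3 * l1)) * (l1 + l2 + l3) =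
      (l1 * l2 * l3 - (l1 + l2 + l3)) * (l1 + l2 + l3) := by rw [hl0]
  have hk := key_sigma2 l1 l2 l3
  nlinarith [hk, hq, hl0s, mul_pos hq hq]
end

section
/- Let λ₀, λ₁, λ₂, λ₃ be real numbers satisfying λ₀+λ₁+λ₂+λ₃ = λ₁λ₂λ₃ + λ₀λ₂λ₃ + λ₀λ₁λ₃ + λ₀λ₁λ₂. If λ₁λ₂ + λ₂λ₃ + λ₃λ₁ > 1, then λ₀λ₁ + λ₀λ₂ + λ₀λ₃ + λ₁λ₂ + λ₁λ₃ + λ₂λ₃ ≥ 6. -/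
theorem cayley_sigma2_ge_six (l0 l1 l2 l3 : ℝ)
    (h : l0 + l1 + l2 + l3 =
      l1 * l2 * l3 + l0 * l2 * l3 + l0 * l1 * l3 + l0 * l1 * l2)
    (h2 : l1 * l2 + l2 * l3 + l3 * l1 > 1) :
    l0 * l1 + l0 * l2 + l0 * l3 + l1 * l2 + l1 * l3 + l2 * l3 ≥ 6 := by
  have h1 : (l1 + l2 + l3) ^ 2 - 3 * (l1 * l2 + l2 * l3 + l3 * l1) ≥ 0 := by
    nlinarith [sq_nonneg (l1 - l2), sq_nonneg (l2 - l3), sq_nonneg (l3 - l1)]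
  have h3 : (l1 * l2 + l2 * l3 + l3 * l1) ^ 2
      - 3 * (l1 + l2 + l3) * (l1 * l2 * l3) ≥ 0 := by
    nlinarith [sq_nonneg (l1*l2 - l2*l3), sq_nonneg (l2*l3 - l3*l1), sq_nonneg (l3*l1 - l1*l2)]
  have hd : l0 * (l1 * l2 + l2 * l3 + l3 * l1 - 1)
      = (l1 + l2 + l3) - l1 * l2 * l3 := by linarith [h]
  have key : (l1 * l2 + l2 * l3 + l3 * l1 - 1) *
      ((l0 * l1 + l0 * l2 + l0 * l3 + l1 * l2 + l1 * l3 + l2 * l3) - 6) ≥ 0 := by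
    have e : (l1 * l2 + l2 * l3 + l3 * l1 - 1) *
        ((l0 * l1 + l0 * l2 + l0 * l3 + l1 * l2 + l1 * l3 + l2 * l3) - 6)
        = (l1 + l2 + l3) * ((l1 + l2 + l3) - l1 * l2 * l3)
          + (l1 * l2 + l2 * l3 + l3 * l1 - 1) * (l1 * l2 + l2 * l3 + l3 * l1 - 6) := by
      have e2 : (l1 + l2 + l3) * (l0 * (l1 * l2 + l2 * l3 + l3 * l1 - 1))
          = (l1 + l2 + l3) * ((l1 + l2 + l3) - l1 * l2 * l3) := by rw [hd]
      nlinarith [e2]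
    rw [e]
    nlinarith [sq_nonneg (l1 * l2 + l2 * l3 + l3 * l1 - 3), h1, h3]
  nlinarith [key, h2]
end

section
/- Let λ₁, λ₂, λ₃ be real numbers with λ₁+λ₂+λ₃ = λ₁λ₂λ₃, and write σ₁ = λ₁+λ₂+λ₃ and σ₂ = λ₁λ₂+λ₂λ₃+λ₃λ₁. Then the determinant of the 3×3 matrix L₀(λ₁,λ₂,λ₃) equals 4(2√2+σ₂)(2√2−σ₂)(4−σ₂) + σ₁²(40−(3−σ₂)²). -/
noncomputable def L0 (l m n : ℝ) : Matrix (Fin 3) (Fin 3) ℝ :=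
  !![6 + m^2 + n^2, -2 + l*m - n^2, -2 + n*l - m^2;
     -2 + l*m - n^2, 6 + n^2 + l^2, -2 + m*n - l^2;
     -2 + n*l - m^2, -2 + m*n - l^2, 6 + l^2 + m^2]

theorem det_L0_formula (l1 l2 l3 : ℝ)
    (h : l1 + l2 + l3 = l1 * l2 * l3) :
    (L0 l1 l2 l3).det =
      4 * (2 * Real.sqrt 2 + (l1*l2 + l2*l3 + l3*l1))
        * (2 * Real.sqrt 2 - (l1*l2 + l2*l3 + l3*l1))
        * (4 - (l1*l2 + l2*l3 + l3*l1))
      + (l1 + l2 + l3)^2 * (40 - (3 - (l1*l2 + l2*l3 + l3*l1))^2) := by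
  have hs : Real.sqrt 2 ^ 2 = 2 := Real.sq_sqrt (by norm_num)
  rw [L0, Matrix.det_fin_three]
  simp [Matrix.cons_val_zero, Matrix.cons_val_one]
  linear_combination
    (l3 + l2 + 2*l2*l3^2 + 2*l2^2*l3 + l1 + 2*l1*l3^2 + 7*l1*l2*l3
      + 2*l1*l2^2 + 2*l1^2*l3 + 2*l1^2*l2) * h
    - 16 * (4 - (l1*l2 + l2*l3 + l3*l1)) * hs
end

section
/- The set of triples (λ₁,λ₂,λ₃) ∈ ℝ³ satisfying λ₁+λ₂+λ₃ = λ₁λ₂λ₃ for which the four matrices L₀(λ₁,λ₂,λ₃), L(λ₁,λ₂,λ₃), L(λ₂,λ₃,λ₁), and L(λ₃,λ₁,λ₂) are all positive semi-definite is a bounded subset of ℝ³. -/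
noncomputable def L (l m n : ℝ) : Matrix (Fin 4) (Fin 4) ℝ :=
  !![4, 0, -1 + m*n, 1 + n*l;
     0, 4 + (l+m)^2, -1 - l*m, 1 + l^2;
     -1 + m*n, -1 - l*m, 4, 0;
     1 + n*l, 1 + l^2, 0, 4 + (l+n)^2]

lemma L_psd_prod_bounds {a b c : ℝ} (h : (L a b c).PosSemidef) : -3 ≤ b*c ∧ b*c ≤ 5 := by
  have h1 := h.dotProduct_mulVec_nonneg ![1,0,1,0]
  have h2 := h.dotProduct_mulVec_nonneg ![1,0,-1,0]
  simp [L, dotProduct, Matrix.mulVec, Fin.sum_univ_succ] at h1 h2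
  constructor <;> linarith

lemma sq_le_36 {a b c : ℝ} (hs : a + b + c = a * b * c)
    (h1 : -3 ≤ a*b) (h2 : a*b ≤ 5) (h3 : -3 ≤ c*a) (h4 : c*a ≤ 5) : a^2 ≤ 36 := by
  have hid : a * (a + b + c) = a * (a * b * c) := by rw [hs]
  have h25 : (a * b) * (c * a) ≤ 25 := by
    rcases le_total 0 (a*b) with h|h <;> rcases le_total 0 (c*a) with h'|h' <;> nlinarith
  nlinarith [hid, h25]

theorem posSemidef_locus_bounded :
    Bornology.IsBounded
      {v : Fin 3 → ℝ | v 0 + v 1 + v 2 = v 0 * v 1 * v 2 ∧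
        (L0 (v 0) (v 1) (v 2)).PosSemidef ∧
        (L (v 0) (v 1) (v 2)).PosSemidef ∧
        (L (v 1) (v 2) (v 0)).PosSemidef ∧
        (L (v 2) (v 0) (v 1)).PosSemidef} := by
  rw [Metric.isBounded_iff_subset_closedBall 0]
  refine ⟨6, fun v hv => ?_⟩
  obtain ⟨hs, -, h1, h2, h3⟩ := hv
  obtain ⟨h1a, h1b⟩ := L_psd_prod_bounds h1  -- bounds on v1*v2
  obtain ⟨h2a, h2b⟩ := L_psd_prod_bounds h2  -- bounds on v2*v0
  obtain ⟨h3a, h3b⟩ := L_psd_prod_bounds h3  -- bounds on v0*v1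
  have hb : ∀ i : Fin 3, (v i)^2 ≤ 36 := by
    intro i
    fin_cases i
    · exact sq_le_36 hs h3a h3b h2a h2b
    · refine sq_le_36 (a := v 1) (b := v 2) (c := v 0) (by linarith [hs]; ) h1a h1b ?_ ?_
      · linarith [h3a, mul_comm (v 0) (v 1)] 
      · linarith [h3b, mul_comm (v 0) (v 1)]
    · refine sq_le_36 (a := v 2) (b := v 0) (c := v 1) (by linarith [hs]) h2a h2b ?_ ?_
      · linarith [h1a, mul_comm (v 1) (v 2)]
      · linarith [h1b, mul_comm (v 1) (v 2)]
  rw [Metric.mem_closedBall, dist_zero_right]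
  refine (pi_norm_le_iff_of_nonneg (by norm_num)).2 fun i => ?_
  rw [Real.norm_eq_abs, abs_le]
  have := hb i
  constructor <;> nlinarith
end

section
/- Let λ₁, λ₂, λ₃ be real numbers with λ₁+λ₂+λ₃ = λ₁λ₂λ₃ and −2√2 < λ₁λ₂+λ₂λ₃+λ₃λ₁ ≤ 0. Then det L₀(λ₁,λ₂,λ₃) > 0. -/
theorem det_L0_pos_on_G0 (l1 l2 l3 : ℝ)
    (h : l1 + l2 + l3 = l1 * l2 * l3)
    (hlow : -(2 * Real.sqrt 2) < l1*l2 + l2*l3 + l3*l1)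
    (hup : l1*l2 + l2*l3 + l3*l1 ≤ 0) :
    0 < (L0 l1 l2 l3).det := by
  set s : ℝ := l1*l2 + l2*l3 + l3*l1 with hs
  set p : ℝ := l1 + l2 + l3 with hp
  have key : (L0 l1 l2 l3).det
      = 4*(s-4)*(s^2-8) + p^2*(31 + 6*s - s^2) := by
    simp only [L0, Matrix.det_fin_three, Matrix.cons_val', Matrix.cons_val_zero,
      Matrix.cons_val_one, Matrix.head_cons, Matrix.empty_val',
      Matrix.cons_val_fin_one, Matrix.head_fin_const, Matrix.cons_val_two,
      Matrix.tail_cons, Matrix.of_apply]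
    rw [hs, hp]
    linear_combination (l1+l2+l3 + l1*l2*l3 + 2*(l1+l2+l3)*(l1*l2+l2*l3+l3*l1)) * h
  have hsqrt : Real.sqrt 2 ^ 2 = 2 := Real.sq_sqrt (by norm_num)
  have hsqrtle : Real.sqrt 2 ≤ 1.5 := by
    nlinarith [Real.sqrt_nonneg 2]
  have hs8 : s^2 < 8 := by nlinarith
  have h1 : 0 < 4*(s-4)*(s^2-8) := by nlinarith
  have h2 : 0 < 31 + 6*s - s^2 := by nlinarith
  rw [key]
  nlinarith [sq_nonneg p, mul_nonneg (sq_nonneg p) h2.le]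
end

section
/- Let λ₁, λ₂ be real numbers with λ₁λ₂ ≠ 1, set λ₃ = (λ₁+λ₂)/(λ₁λ₂−1), t = λ₁λ₂, and s = −(λ₁λ₂+λ₂λ₃+λ₃λ₁). Then det(L(λ₃,λ₁,λ₂))·(1−λ₁λ₂)² = 4(1−t)s(8−s²) + s²(−t⁴+2t³+12t²+16t−20) + 2s(2t⁵−7t⁴−24t³+68t²−42t+12) + (4t⁶−4t⁵−93t⁴+78t³+240t²−408t+192). -/
theorem det4_of (a b c d e f g h i j k l m n o p : ℝ) :
    (!![a,b,c,d; e,f,g,h; i,j,k,l; m,n,o,p] : Matrix (Fin 4) (Fin 4) ℝ).det =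
      a*(f*(k*p - l*o) - g*(j*p - l*n) + h*(j*o - k*n))
      - b*(e*(k*p - l*o) - g*(i*p - l*m) + h*(i*o - k*m))
      + c*(e*(j*p - l*n) - f*(i*p - l*m) + h*(i*n - j*m))
      - d*(e*(j*o - k*n) - f*(i*o - k*m) + g*(i*n - j*m)) := by
  rw [Matrix.det_succ_row_zero, Fin.sum_univ_four]
  simp [Fin.succAbove, Matrix.det_fin_three, Matrix.submatrix_apply, Fin.succ,
    show ((3:Fin 4):ℕ) = 3 from rfl, show (Fin.castSucc 2 : Fin 4) = 2 from rfl]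
  norm_num [Fin.lt_def]
  ring


theorem det_L_identity (l1 l2 : ℝ) (h : l1 * l2 ≠ 1) :
    let l3 : ℝ := (l1 + l2) / (l1 * l2 - 1)
    let t : ℝ := l1 * l2
    let s : ℝ := -(l1*l2 + l2*l3 + l3*l1)
    (L l3 l1 l2).det * (1 - l1*l2)^2 =
      4*(1 - t)*s*(8 - s^2)
      + s^2 * (-t^4 + 2*t^3 + 12*t^2 + 16*t - 20)
      + 2*s * (2*t^5 - 7*t^4 - 24*t^3 + 68*t^2 - 42*t + 12)
      + (4*t^6 - 4*t^5 - 93*t^4 + 78*t^3 + 240*t^2 - 408*t + 192) := by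
  intro l3 t s
  have hd : l1 * l2 - 1 ≠ 0 := sub_ne_zero.mpr h
  rw [show L l3 l1 l2 = !![4, 0, -1 + l1*l2, 1 + l2*l3;
     0, 4 + (l3+l1)^2, -1 - l3*l1, 1 + l3^2;
     -1 + l1*l2, -1 - l3*l1, 4, 0;
     1 + l2*l3, 1 + l3^2, 0, 4 + (l3+l2)^2] from rfl, det4_of]
  simp only [l3, t, s]
  field_simp
  ring
end

section
/- Let λ₁, λ₂, λ₃ be real numbers with λ₁+λ₂+λ₃ = λ₁λ₂λ₃ and 9 ≤ λ₁λ₂+λ₂λ₃+λ₃λ₁ ≤ 15. Then det L₀(λ₁,λ₂,λ₃) > 0. -/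
theorem det_L0_pos_on_Gpm (l1 l2 l3 : ℝ)
    (h : l1 + l2 + l3 = l1 * l2 * l3)
    (hlow : 9 ≤ l1*l2 + l2*l3 + l3*l1)
    (hup : l1*l2 + l2*l3 + l3*l1 ≤ 15) :
    0 < (L0 l1 l2 l3).det := by
  obtain ⟨s1, hs1⟩ : ∃ x : ℝ, x = l1 + l2 + l3 := ⟨_, rfl⟩
  obtain ⟨s2, hs2⟩ : ∃ x : ℝ, x = l1*l2 + l2*l3 + l3*l1 := ⟨_, rfl⟩
  obtain ⟨s3, hs3⟩ : ∃ x : ℝ, x = l1 * l2 * l3 := ⟨_, rfl⟩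
  have key : (L0 l1 l2 l3).det
      = 4*(8 - s2^2)*(4 - s2) + s1^2*(40 - (3 - s2)^2)
        + (s1 - s3)*(2*s1*s2 + s3 + s1) := by
    rw [show (L0 l1 l2 l3).det =
        (6 + l2^2 + l3^2) * ((6 + l3^2 + l1^2) * (6 + l1^2 + l2^2)
          - (-2 + l2*l3 - l1^2) * (-2 + l2*l3 - l1^2))
        - (-2 + l1*l2 - l3^2) * ((-2 + l1*l2 - l3^2) * (6 + l1^2 + l2^2)
          - (-2 + l2*l3 - l1^2) * (-2 + l3*l1 - l2^2))
        + (-2 + l3*l1 - l2^2) * ((-2 + l1*l2 - l3^2) * (-2 + l2*l3 - l1^2)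
          - (6 + l3^2 + l1^2) * (-2 + l3*l1 - l2^2)) from by
      simp [L0, Matrix.det_fin_three]; ring]
    rw [hs1, hs2, hs3]; ring
  have hz : s1 - s3 = 0 := by rw [hs1, hs3, h]; ring
  have newton : 3*(s1*s3) ≤ s2^2 := by
    rw [hs1, hs2, hs3]
    nlinarith [sq_nonneg (l1*l2 - l2*l3), sq_nonneg (l2*l3 - l3*l1),
      sq_nonneg (l1*l2 - l3*l1)]
  have hs13 : s1 * s3 = s1^2 := by rw [hs1, hs3, ← h]; ring
  have hnewt : 3*s1^2 ≤ s2^2 := by rw [← hs13]; exact newton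
  have ha : (0:ℝ) ≤ s1^2 := sq_nonneg _
  have hlow' : (9:ℝ) ≤ s2 := by rw [hs2]; exact hlow
  have hup' : s2 ≤ 15 := by rw [hs2]; exact hup
  rw [key, hz]
  nlinarith [mul_nonneg (sub_nonneg.2 hlow') (sub_nonneg.2 hup'),
    mul_nonneg ha (mul_nonneg (sub_nonneg.2 hlow') (sub_nonneg.2 hup')),
    mul_nonneg (sub_nonneg.2 hnewt) (mul_nonneg (sub_nonneg.2 hlow') (sub_nonneg.2 hup')),
    mul_nonneg (sub_nonneg.2 hnewt) (sub_nonneg.2 hlow'),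
    mul_nonneg ha (sub_nonneg.2 hlow')]
end

section
/- For every ε > 0, the set of quadruples (λ₀,λ₁,λ₂,λ₃) ∈ ℝ⁴ satisfying λ₀+λ₁+λ₂+λ₃ = λ₁λ₂λ₃ + λ₀λ₂λ₃ + λ₀λ₁λ₃ + λ₀λ₁λ₂ and −√6+ε ≤ λ₀λ₁+λ₀λ₂+λ₀λ₃+λ₁λ₂+λ₁λ₃+λ₂λ₃ ≤ 0 is a bounded subset of ℝ⁴. -/
lemma newton_aux (a b c d : ℝ) :
    9 * (a+b+c+d) * (b*c*d + a*c*d + a*b*d + a*b*c) ≤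
    4 * (a*b+a*c+a*d+b*c+b*d+c*d)^2 := by
  nlinarith [sq_nonneg (a*b - c*d), sq_nonneg (a*c - b*d), sq_nonneg (a*d - b*c),
    sq_nonneg (a*b + c*d - a*c - b*d), sq_nonneg (a*b + c*d - a*d - b*c),
    sq_nonneg (a*c + b*d - a*d - b*c), sq_nonneg (a-b), sq_nonneg (c-d),
    sq_nonneg (a*(b+c+d) - b*c - b*d - c*d), sq_nonneg (b*(a+c+d) - a*c-a*d-c*d),
    sq_nonneg (c*(a+b+d) - a*b-a*d-b*d), sq_nonneg (d*(a+b+c) - a*b-a*c-b*c)]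

theorem cayley_pinched_locus_bounded (ε : ℝ) (hε : 0 < ε) :
    Bornology.IsBounded
      {v : Fin 4 → ℝ | (v 0 + v 1 + v 2 + v 3 =
          v 1 * v 2 * v 3 + v 0 * v 2 * v 3 + v 0 * v 1 * v 3 + v 0 * v 1 * v 2) ∧
        -Real.sqrt 6 + ε ≤ v 0 * v 1 + v 0 * v 2 + v 0 * v 3
            + v 1 * v 2 + v 1 * v 3 + v 2 * v 3 ∧
        v 0 * v 1 + v 0 * v 2 + v 0 * v 3 + v 1 * v 2 + v 1 * v 3 + v 2 * v 3 ≤ 0} := by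
  rw [Metric.isBounded_iff_subset_closedBall 0]
  refine ⟨3, fun v hv => ?_⟩
  obtain ⟨h1, h2, h3⟩ := hv
  have hs0 : (0:ℝ) ≤ Real.sqrt 6 := Real.sqrt_nonneg 6
  have hs6 : Real.sqrt 6 ^ 2 = 6 := Real.sq_sqrt (by norm_num)
  have hsle : Real.sqrt 6 ≤ 5/2 := by nlinarith
  set a := v 0; set b := v 1; set c := v 2; set d := v 3
  set q := a*b + a*c + a*d + b*c + b*d + c*d with hq
  have hq2 : q^2 ≤ 6 := by nlinarith
  have hn := newton_aux a b c d
  have he : 9*(a+b+c+d)*(a+b+c+d) ≤ 4*q^2 := by rw [hq]; nth_rewrite 2 [h1]; exact hn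
  have hsum : a^2 + b^2 + c^2 + d^2 ≤ 8 := by nlinarith [he, hq2, hsle, h2, hε]
  have h4 : ∀ x y z w : ℝ, x^2 + y^2 + z^2 + w^2 ≤ 8 → |x| ≤ 3 := by
    intro x y z w h
    rw [abs_le]
    constructor <;> nlinarith [sq_nonneg y, sq_nonneg z, sq_nonneg w]
  have key : ∀ i : Fin 4, |v i| ≤ 3 := by
    intro i
    fin_cases i
    · exact h4 a b c d hsum
    · exact h4 b a c d (by linarith)
    · exact h4 c a b d (by linarith)
    · exact h4 d a b c (by linarith)
  rw [Metric.mem_closedBall, dist_zero_right]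
  exact pi_norm_le_iff_of_nonneg (by norm_num) |>.mpr fun i => by
    simpa using key i
end
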